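/- There exist R₀ > 0 and C > 0 (depending only on c and N) such that if R ≥ R₀, then for every integer k ≥ 1 and every z with R_k/4 ≤ |z| ≤ 4R_k/5, one can write f(z) = 2C_k · (z/R_k)^{n_k} · (1 + δ_k(z)) where |δ_k(z)| ≤ C·((4/5)^{n_k} + R_k^{−1}). -/

import Mathlib

open Complex

noncomputable section

/-- `f₀(z) = z² + c` iterated `N` times. -/
def f0iter (c : ℂ) (N : ℕ) (z : ℂ) : ℂ := (fun w => w ^ 2 + c)^[N] z

/-- `n_k = 2^(N + k - 1)`. -/
def nseq (N k : ℕ) : ℕ := 2 ^ (N + k - 1)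

/-- The radii `R_k`: `R₁ = 2R`, `R_{k+1} = max {|f_k(z)| : |z| = 2 R_k}` where
`f_k(z) = f₀^N(z) · ∏_{j=1}^k (1 - (1/2)(z/R_j)^{n_j})`. -/
def Rseq (c : ℂ) (N : ℕ) (R : ℝ) : ℕ → ℝ
  | 0 => R
  | 1 => 2 * R
  | k + 2 =>
      sSup ((fun z => ‖(f0iter c N z *
        ∏ j ∈ (Finset.Icc 1 (k + 1)).attach,
          (1 - (1 / 2) * (z / ((Rseq c N R j.1 : ℝ) : ℂ)) ^ nseq N j.1))‖) ''
        Metric.sphere (0 : ℂ) (2 * Rseq c N R (k + 1)))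
  decreasing_by
  · have := j.2; simp only [Finset.mem_Icc] at this; omega
  · omega

/-- `F_k(z) = 1 - (1/2)(z/R_k)^{n_k}`. -/
def Fseq (c : ℂ) (N : ℕ) (R : ℝ) (k : ℕ) (z : ℂ) : ℂ :=
  1 - (1 / 2) * (z / ((Rseq c N R k : ℝ) : ℂ)) ^ nseq N k

/-- The partial product `f_k(z) = f₀^N(z) · ∏_{j=1}^k F_j(z)`. -/
def fseq (c : ℂ) (N : ℕ) (R : ℝ) (k : ℕ) (z : ℂ) : ℂ :=
  f0iter c N z * ∏ j ∈ Finset.Icc 1 k, Fseq c N R j z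

/-- The infinite product `f(z) = f₀^N(z) · ∏_{k=1}^∞ F_k(z)`. -/
def flim (c : ℂ) (N : ℕ) (R : ℝ) (z : ℂ) : ℂ :=
  f0iter c N z * ∏' k : ℕ, Fseq c N R (k + 1) z

/-- The standing assumption `1/2 ≤ |f₀^N(z)|/|z|^{2^N} ≤ 2` for `|z| ≥ R`. -/
def OneBound (c : ℂ) (N : ℕ) (R : ℝ) : Prop :=
  ∀ z : ℂ, R ≤ ‖z‖ →
    1 / 2 ≤ ‖f0iter c N z‖ / ‖z‖ ^ 2 ^ N ∧
    ‖f0iter c N z‖ / ‖z‖ ^ 2 ^ N ≤ 2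

/-- `C₁ = R₁^{n₁}/2`, and for `k ≥ 2`,
`C_k = (-1)^{k-1} 2^{-k} R_k^{n_k} ∏_{j=1}^{k-1} R_j^{-n_j}`. -/
def Cseq (c : ℂ) (N : ℕ) (R : ℝ) (k : ℕ) : ℝ :=
  (-1) ^ (k - 1) * Rseq c N R k ^ nseq N k /
    (2 ^ k * ∏ j ∈ Finset.Icc 1 (k - 1), Rseq c N R j ^ nseq N j)

/-!
On the annulus `R_k/4 ≤ |z| ≤ 4R_k/5` each factor of `f` is a monomial times `1 + (small)`:
`f₀^N(z) = z^{2^N}(1 + O(1/|z|))`; for `j < k`, `F_j(z) = -(1/2)(z/R_j)^{n_j}(1 - 2(R_j/z)^{n_j})`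
with `(R_j/|z|)^{n_j}` summing to `O(1/R_k)` because `R_j² ≤ R_k`; and `F_j(z) = 1 + O((4/5)^{n_j})`
for `j ≥ k`, where the `n_j` double so that the tail is `O((4/5)^{n_k})`. The monomials multiply to
exactly `2C_k(z/R_k)^{n_k}` since `2^N + n_1 + ⋯ + n_{k-1} = n_k`, and the relative errors combine
through `‖∏(1 + u_i) - 1‖ ≤ exp(∑‖u_i‖) - 1`. The growth `R_k² ≤ R_{k+1}` comes from evaluating
`f_k` at `z = 2R_k`, where `|F_j(z)| ≥ 1` for `j ≤ k` and `|f₀^N(z)| ≥ |z|^{2^N}/2`.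
-/

open Finset

lemma norm_mul_sub_one_le_exp_add {R : Type*} [SeminormedRing R] [NormOneClass R] {x y : R}
    {s t : ℝ} (hx : ‖x - 1‖ ≤ Real.exp s - 1) (hy : ‖y - 1‖ ≤ Real.exp t - 1) :
    ‖x * y - 1‖ ≤ Real.exp (s + t) - 1 := by
  have hx0 : 0 ≤ Real.exp s - 1 := (norm_nonneg _).trans hx
  calc ‖x * y - 1‖ = ‖(x - 1) * (y - 1) + (x - 1) + (y - 1)‖ := by congr 1; noncomm_ring
    _ ≤ ‖x - 1‖ * ‖y - 1‖ + ‖x - 1‖ + ‖y - 1‖ :=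
      (norm_add₃_le).trans (by gcongr; exact norm_mul_le _ _)
    _ ≤ (Real.exp s - 1) * (Real.exp t - 1) + (Real.exp s - 1) + (Real.exp t - 1) := by
      gcongr
    _ = Real.exp (s + t) - 1 := by rw [Real.exp_add]; ring

lemma norm_tprod_one_add_sub_one_le {ι R : Type*} [NormedCommRing R] [NormOneClass R]
    [CompleteSpace R] {f : ι → R} (hf : Summable fun i ↦ ‖f i‖) :
    ‖∏' i, (1 + f i) - 1‖ ≤ Real.exp (∑' i, ‖f i‖) - 1 := by
  have hlim := ((multipliable_one_add_of_summable hf).hasProd.sub_const 1).norm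
  refine le_of_tendsto hlim (Filter.Eventually.of_forall fun s ↦ ?_)
  grw [s.norm_prod_one_add_sub_one_le f, hf.sum_le_tsum s fun i _ ↦ norm_nonneg _]

lemma norm_div_pow_sub_one_le {w z : ℂ} {n : ℕ} {B : ℝ} (hz : z ≠ 0)
    (h : ‖w - z ^ n‖ * ‖z‖ ≤ B * ‖z‖ ^ n) : ‖w / z ^ n - 1‖ ≤ B / ‖z‖ := by
  have hzn : z ^ n ≠ 0 := pow_ne_zero _ hz
  rw [← div_self hzn, ← sub_div, norm_div, norm_pow,
    div_le_div_iff₀ (pow_pos (norm_pos_iff.2 hz) _) (norm_pos_iff.2 hz)]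
  exact h

lemma one_le_norm_one_sub_half_mul_pow {w : ℂ} {n : ℕ} (hn : 2 ≤ n) (hw : 2 ≤ ‖w‖) :
    1 ≤ ‖1 - 1 / 2 * w ^ n‖ := by
  have h4 : (4 : ℝ) ≤ ‖w‖ ^ n :=
    calc (4 : ℝ) = 2 ^ 2 := by norm_num
      _ ≤ 2 ^ n := pow_le_pow_right₀ (by norm_num) hn
      _ ≤ ‖w‖ ^ n := by gcongr
  have := norm_sub_norm_le (1 / 2 * w ^ n) 1
  rw [norm_sub_rev, norm_mul, norm_pow] at this
  norm_num at this
  linarith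

lemma prod_Icc_one_eq_prod_range {M : Type*} [CommMonoid M] (g : ℕ → M) (k : ℕ) :
    ∏ j ∈ Icc 1 k, g j = ∏ i ∈ range k, g (i + 1) := by
  induction k with
  | zero => simp
  | succ k ih => rw [prod_Icc_succ_top (by omega), prod_range_succ, ih]

lemma lt_nseq (N j : ℕ) : N + j - 1 < nseq N j := Nat.lt_two_pow_self

lemma two_le_nseq {N : ℕ} (hN : 1 ≤ N) {j : ℕ} (hj : 1 ≤ j) : 2 ≤ nseq N j := by
  have := lt_nseq N j
  omega

lemma succ_le_nseq {N : ℕ} (hN : 1 ≤ N) (j : ℕ) : j + 1 ≤ nseq N j := by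
  have := lt_nseq N j
  omega

lemma mul_nseq_le_nseq_add {N : ℕ} (hN : 1 ≤ N) (k i : ℕ) : i * nseq N k ≤ nseq N (k + i) := by
  rw [nseq, nseq, show N + (k + i) - 1 = N + k - 1 + i by omega, pow_add, mul_comm]
  exact Nat.mul_le_mul_left _ Nat.lt_two_pow_self.le

lemma two_pow_add_sum_nseq (N m : ℕ) : 2 ^ N + ∑ j ∈ Icc 1 m, nseq N j = nseq N (m + 1) := by
  induction m with
  | zero => simp [nseq]
  | succ m ih =>
    rw [sum_Icc_succ_top (by omega), ← add_assoc, ih, nseq, nseq, show N + (m + 1 + 1) - 1 =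
      N + (m + 1) - 1 + 1 by omega, pow_succ]
    ring

lemma sum_pow_nseq_le {N : ℕ} (hN : 1 ≤ N) {m : ℕ} {x : ℕ → ℝ} {q : ℝ} (hq0 : 0 ≤ q)
    (hq : q ≤ 1 / 2) (hx : ∀ j ∈ Icc 1 m, 0 ≤ x j ∧ x j ≤ q) : ∑ j ∈ Icc 1 m, x j ^ nseq N j ≤ 2 * q ^ 2 := by
  calc ∑ j ∈ Icc 1 m, x j ^ nseq N j ≤ ∑ j ∈ Ico 1 (m + 1), q * q ^ j := by
        rw [Ico_add_one_right_eq_Icc]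
        refine sum_le_sum fun j hj ↦ ?_
        rw [← pow_succ']
        exact (pow_le_pow_left₀ (hx j hj).1 (hx j hj).2 _).trans
          (pow_le_pow_of_le_one hq0 (by linarith) (succ_le_nseq hN j))
    _ ≤ q * (q ^ 1 / (1 - q)) := by
        rw [← mul_sum]; gcongr; exact geom_sum_Ico_le_of_lt_one hq0 (by linarith)
    _ ≤ 2 * q ^ 2 := by
        rw [pow_one, mul_div_assoc', div_le_iff₀ (by linarith)]; nlinarith

lemma four_fifths_pow_nseq_le {N : ℕ} (hN : 10 ≤ N) (k : ℕ) : (4 / 5 : ℝ) ^ nseq N k ≤ 1 / 6 := calc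
  (4 / 5 : ℝ) ^ nseq N k ≤ (4 / 5) ^ 10 :=
    pow_le_pow_of_le_one (by norm_num) (by norm_num) (by have := lt_nseq N k; omega)
  _ ≤ 1 / 6 := by norm_num

lemma f0iter_succ (c : ℂ) (N : ℕ) (z : ℂ) : f0iter c (N + 1) z = f0iter c N z ^ 2 + c := by
  simp only [f0iter, Function.iterate_succ_apply']

lemma exists_norm_f0iter_sub_pow_mul_le (c : ℂ) (N : ℕ) : ∃ B : ℝ, 0 ≤ B ∧ ∀ z : ℂ, 1 ≤ ‖z‖ →
    ‖f0iter c N z - z ^ 2 ^ N‖ * ‖z‖ ≤ B * ‖z‖ ^ 2 ^ N := by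
  induction N with
  | zero => exact ⟨0, le_rfl, fun z _ ↦ by simp [f0iter]⟩
  | succ N ih =>
    obtain ⟨B, hB0, hB⟩ := ih
    refine ⟨2 * B + B ^ 2 + ‖c‖, by positivity, fun z hz ↦ ?_⟩
    set e := f0iter c N z - z ^ 2 ^ N
    have hpow : z ^ 2 ^ (N + 1) = (z ^ 2 ^ N) ^ 2 := by rw [pow_succ, pow_mul]
    have hdiff : f0iter c (N + 1) z - z ^ 2 ^ (N + 1) = 2 * z ^ 2 ^ N * e + e ^ 2 + c := by
      rw [f0iter_succ, hpow]; ring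
    have hnorm : ‖z‖ ^ 2 ^ (N + 1) = ‖z‖ ^ 2 ^ N * ‖z‖ ^ 2 ^ N := by rw [pow_succ, pow_mul, sq]
    have he := hB z hz
    have hz1 : ‖z‖ ≤ ‖z‖ ^ 2 ^ N * ‖z‖ ^ 2 ^ N := by
      simpa [← hnorm] using le_self_pow₀ hz (by positivity)
    have hsq : ‖e‖ ^ 2 * ‖z‖ ≤ (‖e‖ * ‖z‖) ^ 2 := by
      nlinarith [norm_nonneg e, mul_nonneg (sq_nonneg ‖e‖) (sub_nonneg.2 hz)]
    rw [hdiff, hnorm]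
    calc ‖2 * z ^ 2 ^ N * e + e ^ 2 + c‖ * ‖z‖
        ≤ (2 * ‖z‖ ^ 2 ^ N * ‖e‖ + ‖e‖ ^ 2 + ‖c‖) * ‖z‖ := by
          gcongr
          refine (norm_add₃_le).trans ?_
          simp [norm_pow]
      _ = 2 * ‖z‖ ^ 2 ^ N * (‖e‖ * ‖z‖) + ‖e‖ ^ 2 * ‖z‖ + ‖c‖ * ‖z‖ := by ring
      _ ≤ 2 * ‖z‖ ^ 2 ^ N * (B * ‖z‖ ^ 2 ^ N) + (B * ‖z‖ ^ 2 ^ N) ^ 2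
          + ‖c‖ * (‖z‖ ^ 2 ^ N * ‖z‖ ^ 2 ^ N) := by
          gcongr
          exact hsq.trans (by gcongr)
      _ = (2 * B + B ^ 2 + ‖c‖) * (‖z‖ ^ 2 ^ N * ‖z‖ ^ 2 ^ N) := by ring

variable {c : ℂ} {N : ℕ} {R : ℝ}

lemma continuous_fseq (k : ℕ) : Continuous (fseq c N R k) := by
  have hf0 : Continuous (f0iter c N) := (continuous_pow 2 |>.add continuous_const).iterate N
  unfold fseq Fseq
  fun_prop

lemma Rseq_add_two (k : ℕ) :
    Rseq c N R (k + 2) =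
      sSup ((‖fseq c N R (k + 1) ·‖) '' Metric.sphere 0 (2 * Rseq c N R (k + 1))) := by
  rw [Rseq]
  congr! 3 with z
  rw [fseq]
  congr 1
  exact prod_attach (Icc 1 (k + 1)) (Fseq c N R · z)

lemma norm_fseq_le_Rseq_succ {k : ℕ} (hk : 1 ≤ k) {z : ℂ} (hz : ‖z‖ = 2 * Rseq c N R k) :
    ‖fseq c N R k z‖ ≤ Rseq c N R (k + 1) := by
  obtain ⟨m, rfl⟩ : ∃ m, k = m + 1 := ⟨k - 1, by omega⟩
  rw [Rseq_add_two]
  refine le_csSup ?_ ⟨z, by simpa using hz, rfl⟩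
  exact ((isCompact_sphere _ _).image (continuous_fseq (m + 1)).norm).bddAbove

lemma sq_Rseq_le_Rseq_succ (hN : 1 ≤ N) (hR : 1 ≤ R) (hOB : OneBound c N R) {k : ℕ}
    (hk : 1 ≤ k) (hRseq : ∀ j ∈ Icc 1 k, 2 * R ≤ Rseq c N R j ∧ Rseq c N R j ≤ Rseq c N R k) :
    Rseq c N R k ^ 2 ≤ Rseq c N R (k + 1) := by
  set Rk := Rseq c N R k
  have hRk : 2 * R ≤ Rk := (hRseq k (mem_Icc.2 ⟨hk, le_rfl⟩)).1
  set z₀ : ℂ := ((2 * Rk : ℝ) : ℂ)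
  have hz₀ : ‖z₀‖ = 2 * Rk := by simp [z₀, abs_of_nonneg (by linarith : (0 : ℝ) ≤ Rk)]
  have hf0 : 1 / 2 * ‖z₀‖ ^ 2 ^ N ≤ ‖f0iter c N z₀‖ := by
    have := (hOB z₀ (by linarith)).1
    rwa [le_div_iff₀ (pow_pos (by rw [hz₀]; linarith) _)] at this
  have hF : ∀ j ∈ Icc 1 k, 1 ≤ ‖Fseq c N R j z₀‖ := fun j hj ↦ by
    have hRj := hRseq j hj
    refine one_le_norm_one_sub_half_mul_pow (two_le_nseq hN (mem_Icc.1 hj).1) ?_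
    rw [norm_div, hz₀, Complex.norm_real, Real.norm_eq_abs, abs_of_pos (by linarith),
      le_div_iff₀ (by linarith)]
    linarith
  have hpow : (2 * Rk) ^ 2 ≤ (2 * Rk) ^ 2 ^ N :=
    pow_le_pow_right₀ (by linarith) (Nat.le_self_pow (by omega) 2)
  calc Rk ^ 2 ≤ 1 / 2 * ‖z₀‖ ^ 2 ^ N * 1 := by rw [hz₀]; nlinarith
    _ ≤ ‖f0iter c N z₀‖ * ∏ j ∈ Icc 1 k, ‖Fseq c N R j z₀‖ :=
      mul_le_mul hf0 (one_le_prod hF) zero_le_one (norm_nonneg _)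
    _ = ‖fseq c N R k z₀‖ := by rw [fseq, norm_mul, norm_prod]
    _ ≤ Rseq c N R (k + 1) := norm_fseq_le_Rseq_succ hk hz₀

lemma Rseq_growth (hN : 1 ≤ N) (hR : 1 ≤ R) (hOB : OneBound c N R) {k : ℕ} (hk : 1 ≤ k) :
    ∀ j ∈ Icc 1 k, 2 * R ≤ Rseq c N R j ∧ Rseq c N R j ≤ Rseq c N R k := by
  induction k, hk using Nat.le_induction with
  | base =>
    intro j hj
    obtain rfl : j = 1 := by simp at hj; omega
    exact ⟨le_of_eq (by rw [Rseq]), le_rfl⟩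
  | succ k hk ih =>
    have hsq := sq_Rseq_le_Rseq_succ hN hR hOB hk ih
    have hRk := (ih k (mem_Icc.2 ⟨hk, le_rfl⟩)).1
    have hle : Rseq c N R k ≤ Rseq c N R (k + 1) := by nlinarith
    intro j hj
    rcases (mem_Icc.1 hj).2.lt_or_eq with hj' | rfl
    · have := ih j (mem_Icc.2 ⟨(mem_Icc.1 hj).1, by omega⟩)
      exact ⟨this.1, this.2.trans hle⟩
    · exact ⟨hRk.trans hle, le_rfl⟩

lemma two_mul_le_Rseq (hN : 1 ≤ N) (hR : 1 ≤ R) (hOB : OneBound c N R) {k : ℕ} (hk : 1 ≤ k) :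
    2 * R ≤ Rseq c N R k :=
  (Rseq_growth hN hR hOB hk k (mem_Icc.2 ⟨hk, le_rfl⟩)).1

lemma Rseq_le_Rseq_of_le (hN : 1 ≤ N) (hR : 1 ≤ R) (hOB : OneBound c N R) {j k : ℕ}
    (hj : 1 ≤ j) (hjk : j ≤ k) : Rseq c N R j ≤ Rseq c N R k :=
  (Rseq_growth hN hR hOB (hj.trans hjk) j (mem_Icc.2 ⟨hj, hjk⟩)).2

lemma sq_Rseq_le_of_lt (hN : 1 ≤ N) (hR : 1 ≤ R) (hOB : OneBound c N R) {j k : ℕ}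
    (hj : 1 ≤ j) (hjk : j < k) : Rseq c N R j ^ 2 ≤ Rseq c N R k := by
  obtain ⟨m, rfl⟩ : ∃ m, k = m + 1 := ⟨k - 1, by omega⟩
  calc Rseq c N R j ^ 2 ≤ Rseq c N R m ^ 2 := by
        gcongr
        · linarith [two_mul_le_Rseq hN hR hOB hj]
        · exact Rseq_le_Rseq_of_le hN hR hOB hj (by omega)
    _ ≤ Rseq c N R (m + 1) :=
        sq_Rseq_le_Rseq_succ hN hR hOB (by omega) (Rseq_growth hN hR hOB (by omega))

lemma Fseq_eq_mul_one_sub {j : ℕ} {z : ℂ} (hz : z ≠ 0) (hR : Rseq c N R j ≠ 0) :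
    Fseq c N R j z = -(1 / 2) * (z / (Rseq c N R j : ℂ)) ^ nseq N j *
      (1 - 2 * ((z / (Rseq c N R j : ℂ)) ^ nseq N j)⁻¹) := by
  have : (z / (Rseq c N R j : ℂ)) ^ nseq N j ≠ 0 :=
    pow_ne_zero _ (div_ne_zero hz (by exact_mod_cast hR))
  rw [Fseq]
  field_simp
  ring

lemma pow_mul_prod_eq_Cseq {m : ℕ} (hR : ∀ j ∈ Icc 1 (m + 1), Rseq c N R j ≠ 0) (z : ℂ) :
    z ^ 2 ^ N * ∏ j ∈ Icc 1 m, (-(1 / 2) * (z / (Rseq c N R j : ℂ)) ^ nseq N j) =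
      2 * (Cseq c N R (m + 1) : ℂ) * (z / (Rseq c N R (m + 1) : ℂ)) ^ nseq N (m + 1) := by
  have hRk : (Rseq c N R (m + 1) : ℂ) ≠ 0 := by exact_mod_cast hR _ (by simp)
  have hD : ∏ j ∈ Icc 1 m, (Rseq c N R j : ℂ) ^ nseq N j ≠ 0 :=
    prod_ne_zero_iff.2 fun j hj ↦ pow_ne_zero _ (by exact_mod_cast hR j (by simp at hj ⊢; omega))
  rw [Cseq, ← two_pow_add_sum_nseq N m, prod_mul_distrib, prod_const, Nat.card_Icc,
    add_tsub_cancel_right]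
  simp only [div_pow, prod_div_distrib, prod_pow_eq_pow_sum]
  push_cast
  have h2 : (-1 / 2 : ℂ) ^ m * 2 ^ m = (-1) ^ m := by rw [← mul_pow]; norm_num
  field_simp
  linear_combination (2 * z ^ (∑ j ∈ Icc 1 m, nseq N j) * z ^ 2 ^ N) * h2

/-- `1 + δ_k(z)` for `k = m + 1`. -/
def correctionFactor (c : ℂ) (N : ℕ) (R : ℝ) (m : ℕ) (z : ℂ) : ℂ :=
  f0iter c N z / z ^ 2 ^ N *
    (∏ j ∈ Icc 1 m, (1 - 2 * ((z / (Rseq c N R j : ℂ)) ^ nseq N j)⁻¹)) *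
    Fseq c N R (m + 1) z * ∏' i, Fseq c N R (i + (m + 1) + 1) z

lemma flim_eq_mul_correctionFactor {m : ℕ} {z : ℂ} (hz : z ≠ 0)
    (hR : ∀ j ∈ Icc 1 (m + 1), Rseq c N R j ≠ 0)
    (htail : Multipliable fun i ↦ Fseq c N R (i + (m + 1) + 1) z) :
    flim c N R z = 2 * (Cseq c N R (m + 1) : ℂ) *
      (z / (Rseq c N R (m + 1) : ℂ)) ^ nseq N (m + 1) * correctionFactor c N R m z := by
  have hhead : ∏ j ∈ Icc 1 m, Fseq c N R j z =
      (∏ j ∈ Icc 1 m, (-(1 / 2) * (z / (Rseq c N R j : ℂ)) ^ nseq N j)) *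
        ∏ j ∈ Icc 1 m, (1 - 2 * ((z / (Rseq c N R j : ℂ)) ^ nseq N j)⁻¹) := by
    rw [← prod_mul_distrib]
    exact prod_congr rfl fun j hj ↦ Fseq_eq_mul_one_sub hz (hR j (by simp at hj ⊢; omega))
  have hsplit := Multipliable.prod_mul_tprod_nat_mul' (f := fun i ↦ Fseq c N R (i + 1) z) htail
  rw [flim, ← hsplit, ← prod_Icc_one_eq_prod_range (Fseq c N R · z), prod_Icc_succ_top (by omega),
    hhead, ← pow_mul_prod_eq_Cseq hR z, correctionFactor]
  obtain ⟨q, hq⟩ : ∃ q, f0iter c N z = z ^ 2 ^ N * q :=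
    ⟨_, (mul_div_cancel₀ _ (pow_ne_zero _ hz)).symm⟩
  rw [hq, mul_div_cancel_left₀ _ (pow_ne_zero _ hz)]
  ring

lemma sum_norm_two_mul_inv_pow_le (hN : 1 ≤ N) (hR : 32 ≤ R) (hOB : OneBound c N R) {m : ℕ}
    {z : ℂ} (hz : Rseq c N R (m + 1) / 4 ≤ ‖z‖) :
    ∑ j ∈ Icc 1 m, ‖2 * ((z / (Rseq c N R j : ℂ)) ^ nseq N j)⁻¹‖ ≤ 64 / Rseq c N R (m + 1) := by
  set Rk := Rseq c N R (m + 1)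
  have hRk : 64 ≤ Rk := by linarith [two_mul_le_Rseq hN (by linarith) hOB (Nat.le_add_left 1 m)]
  have hsqrt : 8 ≤ √Rk := Real.le_sqrt_of_sq_le (by linarith)
  have hzpos : 0 < ‖z‖ := by linarith
  have hx : ∀ j ∈ Icc 1 m, 0 ≤ Rseq c N R j / ‖z‖ ∧ Rseq c N R j / ‖z‖ ≤ 4 / √Rk := fun j hj ↦ by
    have hj := mem_Icc.1 hj
    have hRj := two_mul_le_Rseq hN (by linarith) hOB hj.1
    have hRj' : Rseq c N R j ≤ √Rk :=
      Real.le_sqrt_of_sq_le (sq_Rseq_le_of_lt hN (by linarith) hOB hj.1 (by omega))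
    refine ⟨div_nonneg (by linarith) hzpos.le, ?_⟩
    rw [div_le_div_iff₀ hzpos (by positivity)]
    nlinarith [Real.mul_self_sqrt (by linarith : (0 : ℝ) ≤ Rk)]
  have hnorm : ∀ j ∈ Icc 1 m, ‖2 * ((z / (Rseq c N R j : ℂ)) ^ nseq N j)⁻¹‖ =
      2 * (Rseq c N R j / ‖z‖) ^ nseq N j := fun j hj ↦ by
    rw [norm_mul, norm_inv, norm_pow, norm_div, Complex.norm_real, Real.norm_eq_abs,
      abs_of_nonneg (by linarith [two_mul_le_Rseq hN (by linarith) hOB (mem_Icc.1 hj).1]),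
      ← inv_pow, inv_div]
    norm_num
  calc ∑ j ∈ Icc 1 m, ‖2 * ((z / (Rseq c N R j : ℂ)) ^ nseq N j)⁻¹‖
      = 2 * ∑ j ∈ Icc 1 m, (Rseq c N R j / ‖z‖) ^ nseq N j := by
        rw [sum_congr rfl hnorm, mul_sum]
    _ ≤ 2 * (2 * (4 / √Rk) ^ 2) := by
        gcongr
        exact sum_pow_nseq_le hN (by positivity) (by rw [div_le_iff₀ (by linarith)]; linarith) hx
    _ = 64 / Rk := by rw [div_pow, Real.sq_sqrt (by linarith)]; ring

lemma norm_Fseq_sub_one_le {j : ℕ} {z : ℂ} (hRj : 0 < Rseq c N R j)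
    (hz : ‖z‖ ≤ 4 * Rseq c N R j / 5) : ‖Fseq c N R j z - 1‖ ≤ (4 / 5) ^ nseq N j := by
  have hq : ‖z‖ / Rseq c N R j ≤ 4 / 5 := by rw [div_le_iff₀ hRj]; linarith
  have hnorm : ‖z / (Rseq c N R j : ℂ)‖ = ‖z‖ / Rseq c N R j := by
    rw [norm_div, Complex.norm_real, Real.norm_eq_abs, abs_of_pos hRj]
  rw [Fseq, sub_sub_cancel_left, norm_neg, norm_mul, norm_pow, hnorm]
  calc ‖(1 / 2 : ℂ)‖ * (‖z‖ / Rseq c N R j) ^ nseq N j ≤ 1 * (4 / 5) ^ nseq N j := by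
        gcongr
        norm_num
    _ = _ := one_mul _

lemma summable_norm_Fseq_sub_one_and_tsum_le (hN : 1 ≤ N) (hR : 1 ≤ R) (hOB : OneBound c N R)
    {k : ℕ} (hk : 1 ≤ k) {z : ℂ} (hz : ‖z‖ ≤ 4 * Rseq c N R k / 5)
    (ha : (4 / 5 : ℝ) ^ nseq N k ≤ 1 / 2) :
    Summable (fun i ↦ ‖Fseq c N R (i + k + 1) z - 1‖) ∧
      ∑' i, ‖Fseq c N R (i + k + 1) z - 1‖ ≤ 2 * (4 / 5) ^ nseq N k := by
  set a : ℝ := (4 / 5) ^ nseq N k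
  have ha0 : 0 ≤ a := by positivity
  have hterm : ∀ i, ‖Fseq c N R (i + k + 1) z - 1‖ ≤ a * a ^ i := fun i ↦ by
    have hmono := Rseq_le_Rseq_of_le hN hR hOB hk (show k ≤ i + k + 1 by omega)
    have hRk := two_mul_le_Rseq hN hR hOB hk
    refine (norm_Fseq_sub_one_le (by linarith) (by linarith)).trans ?_
    rw [← pow_succ', ← pow_mul, show i + k + 1 = k + (i + 1) by omega]
    exact pow_le_pow_of_le_one (by norm_num) (by norm_num)
      (by simpa [mul_comm] using mul_nseq_le_nseq_add hN k (i + 1))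
  have hgeom : HasSum (fun i ↦ a * a ^ i) (a * (1 - a)⁻¹) :=
    (hasSum_geometric_of_lt_one ha0 (by linarith)).mul_left a
  have hsum := hgeom.summable.of_nonneg_of_le (fun _ ↦ norm_nonneg _) hterm
  refine ⟨hsum, (hsum.tsum_le_tsum hterm hgeom.summable).trans ?_⟩
  rw [hgeom.tsum_eq, ← div_eq_mul_inv, div_le_iff₀ (by linarith)]
  nlinarith

lemma norm_correctionFactor_sub_one_le_exp {m : ℕ} {z : ℂ}
    (htail : Summable fun i ↦ ‖Fseq c N R (i + (m + 1) + 1) z - 1‖) :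
    ‖correctionFactor c N R m z - 1‖ ≤
      Real.exp (‖f0iter c N z / z ^ 2 ^ N - 1‖ +
        ∑ j ∈ Icc 1 m, ‖2 * ((z / (Rseq c N R j : ℂ)) ^ nseq N j)⁻¹‖ +
        ‖Fseq c N R (m + 1) z - 1‖ + ∑' i, ‖Fseq c N R (i + (m + 1) + 1) z - 1‖) - 1 := by
  have hP := (Icc 1 m).norm_prod_one_add_sub_one_le
    fun j ↦ -(2 * ((z / (Rseq c N R j : ℂ)) ^ nseq N j)⁻¹)
  have hT := norm_tprod_one_add_sub_one_le htail
  simp only [← sub_eq_add_neg, norm_neg, add_sub_cancel] at hP hT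
  have self_le (x : ℝ) : x ≤ Real.exp x - 1 := by linarith [Real.add_one_le_exp x]
  exact norm_mul_sub_one_le_exp_add (norm_mul_sub_one_le_exp_add
    (norm_mul_sub_one_le_exp_add (self_le _) hP) (self_le _)) hT

lemma norm_correctionFactor_sub_one_le (hN : 10 ≤ N) {B : ℝ} (hB0 : 0 ≤ B)
    (hB : ∀ z : ℂ, 1 ≤ ‖z‖ → ‖f0iter c N z - z ^ 2 ^ N‖ * ‖z‖ ≤ B * ‖z‖ ^ 2 ^ N)
    (hR : 4 * B + 64 ≤ R) (hOB : OneBound c N R) {m : ℕ} {z : ℂ}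
    (hz₁ : Rseq c N R (m + 1) / 4 ≤ ‖z‖) (hz₂ : ‖z‖ ≤ 4 * Rseq c N R (m + 1) / 5) :
    ‖correctionFactor c N R m z - 1‖ ≤
      (8 * B + 128) * ((4 / 5 : ℝ) ^ nseq N (m + 1) + (Rseq c N R (m + 1))⁻¹) := by
  have hN1 : 1 ≤ N := by omega
  have hR1 : 1 ≤ R := by linarith
  set Rk := Rseq c N R (m + 1)
  set a : ℝ := (4 / 5) ^ nseq N (m + 1)
  have hRk : 2 * R ≤ Rk := two_mul_le_Rseq hN1 hR1 hOB (by omega)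
  have ha : a ≤ 1 / 6 := four_fifths_pow_nseq_le hN (m + 1)
  have ha0 : 0 ≤ a := by positivity
  have hz0 : z ≠ 0 := norm_pos_iff.1 (by linarith)
  obtain ⟨htail, htail_le⟩ := summable_norm_Fseq_sub_one_and_tsum_le hN1 hR1 hOB
    (Nat.le_add_left 1 m) hz₂ (by linarith)
  have h₀ : ‖f0iter c N z / z ^ 2 ^ N - 1‖ ≤ 4 * B / Rk :=
    (norm_div_pow_sub_one_le hz0 (hB z (by linarith))).trans
      (by rw [div_le_div_iff₀ (by linarith) (by linarith)]; nlinarith)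
  have h₁ : _ ≤ 64 / Rk := sum_norm_two_mul_inv_pow_le hN1 (by linarith) hOB hz₁
  have h₂ : _ ≤ a := norm_Fseq_sub_one_le (by linarith) hz₂
  set s := 4 * B / Rk + 64 / Rk + a + 2 * a
  have hRk0 : 0 < Rk := by linarith
  have hs0 : 0 ≤ s := by positivity
  have hs : s ≤ 1 := by
    have : 4 * B / Rk + 64 / Rk ≤ 1 / 2 := by
      rw [← add_div, div_le_iff₀ hRk0]; linarith
    linarith
  calc ‖correctionFactor c N R m z - 1‖ ≤ Real.exp s - 1 :=
        (norm_correctionFactor_sub_one_le_exp htail).trans (by gcongr; linarith)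
    _ ≤ 2 * s := by
        have := Real.abs_exp_sub_one_le (x := s) (by rwa [abs_of_nonneg hs0])
        rw [abs_of_nonneg hs0] at this
        exact (le_abs_self _).trans this
    _ ≤ (8 * B + 128) * (a + Rk⁻¹) := by
        have : 6 * a ≤ (8 * B + 128) * a := mul_le_mul_of_nonneg_right (by linarith) ha0
        simp only [s, div_eq_mul_inv]
        linarith

/-- There are `R₀ > 0` and `C > 0` (depending only on `c`, `N`) such that for `R ≥ R₀`,
every `k ≥ 1` and `z` with `R_k/4 ≤ |z| ≤ 4R_k/5`,
`f(z) = 2C_k (z/R_k)^{n_k} (1 + δ_k(z))` with `|δ_k(z)| ≤ C ((4/5)^{n_k} + R_k⁻¹)`. -/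
theorem stmt12 (c : ℂ) (N : ℕ) (hN : 10 ≤ N) :
    ∃ R₀ : ℝ, 0 < R₀ ∧ ∃ C : ℝ, 0 < C ∧
      ∀ R : ℝ, R₀ ≤ R → OneBound c N R →
        ∀ k : ℕ, 1 ≤ k → ∀ z : ℂ,
          Rseq c N R k / 4 ≤ ‖z‖ → ‖z‖ ≤ 4 * Rseq c N R k / 5 →
          ∃ δ : ℂ,
            flim c N R z =
              2 * (Cseq c N R k : ℂ) * (z / ((Rseq c N R k : ℝ) : ℂ)) ^ nseq N k *
                (1 + δ) ∧
            ‖δ‖ ≤ C * ((4 / 5 : ℝ) ^ nseq N k + (Rseq c N R k)⁻¹) := by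
  obtain ⟨B, hB0, hB⟩ := exists_norm_f0iter_sub_pow_mul_le c N
  refine ⟨4 * B + 64, by positivity, 8 * B + 128, by positivity,
    fun R hR hOB k hk z hz₁ hz₂ ↦ ?_⟩
  obtain ⟨m, rfl⟩ : ∃ m, k = m + 1 := ⟨k - 1, by omega⟩
  have hN1 : 1 ≤ N := by omega
  have hR1 : 1 ≤ R := by linarith
  have hRpos : ∀ j, 1 ≤ j → 0 < Rseq c N R j := fun j hj ↦ by
    linarith [two_mul_le_Rseq hN1 hR1 hOB hj]
  have hz0 : z ≠ 0 := norm_pos_iff.1 (by linarith [hRpos (m + 1) (by omega)])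
  have htail := (summable_norm_Fseq_sub_one_and_tsum_le hN1 hR1 hOB (Nat.le_add_left 1 m) hz₂
    (by linarith [four_fifths_pow_nseq_le hN (m + 1)])).1
  refine ⟨correctionFactor c N R m z - 1, ?_,
    norm_correctionFactor_sub_one_le hN hB0 hB hR hOB hz₁ hz₂⟩
  rw [add_sub_cancel]
  exact flim_eq_mul_correctionFactor hz0 (fun j hj ↦ (hRpos j (mem_Icc.1 hj).1).ne')
    (by simpa using multipliable_one_add_of_summable htail)

end
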